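/- arXiv:math/9903209 — 4 statements merged into one kernel-verified Lean document; each statement's English description precedes it below -/
import Mathlib

section
/- Let n ≥ 1, let r, r_1, …, r_n be positive integers, let r' be a nonnegative integer, and let c_1, …, c_n be integers satisfying the chain relations c_i r_i = r_{i-1} + r_{i+1} for i = 1, …, n, where r_0 := r and r_{n+1} := r'. Then gcd(r, r_1) = gcd(r_1, r_2) = … = gcd(r_{n-1}, r_n) = gcd(r_n, r'). In particular, in the terminal case r' = 0 one has gcd(r, r_1) = r_n, and r_n divides r_i for every i = 1, …, n. -/
/-!
A relation `k * b = a + c` says `c ≡ -a (mod b)`, so `gcd a b = gcd b c`: each chain relation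
passes the gcd of one consecutive pair on to the next, and the gcd is constant along the chain.
When `r' = 0` the last gcd is `gcd (r_n, 0) = r_n`, which therefore divides every `r_i`.
-/

theorem Int.gcd_eq_gcd_of_mul_eq_add {a b c k : ℤ} (h : k * b = a + c) :
    Int.gcd a b = Int.gcd b c := by
  rw [show c = k * b - a by linarith, Int.gcd_mul_right_sub_right, Int.gcd_comm]

theorem apply_eq_apply_zero_of_forall_lt_eq_succ {α : Type*} {f : ℕ → α} {n : ℕ}
    (h : ∀ i < n, f i = f (i + 1)) : ∀ i ≤ n, f i = f 0 := by
  intro i hi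
  induction i with
  | zero => rfl
  | succ i ih => rw [← h i hi, ih (Nat.le_of_succ_le hi)]

section Chain

variable {n : ℕ} {ρ c : ℕ → ℤ}
  (hrel : ∀ i, 1 ≤ i → i ≤ n → c i * ρ i = ρ (i - 1) + ρ (i + 1))
include hrel

theorem chain_gcd_pred_eq_gcd_succ {i : ℕ} (hi₁ : 1 ≤ i) (hin : i ≤ n) :
    Int.gcd (ρ (i - 1)) (ρ i) = Int.gcd (ρ i) (ρ (i + 1)) :=
  Int.gcd_eq_gcd_of_mul_eq_add (hrel i hi₁ hin)

theorem chain_gcd_eq_gcd_zero_one {i : ℕ} (hin : i ≤ n) :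
    Int.gcd (ρ i) (ρ (i + 1)) = Int.gcd (ρ 0) (ρ 1) :=
  apply_eq_apply_zero_of_forall_lt_eq_succ (f := fun j => Int.gcd (ρ j) (ρ (j + 1)))
    (fun j hj => chain_gcd_pred_eq_gcd_succ hrel (Nat.le_add_left 1 j) hj) i hin

end Chain

theorem chain_consecutive_gcds_constant_general (n : ℕ) (ρ : ℕ → ℤ) (c : ℕ → ℤ)
    (hpos : ∀ i ≤ n, 0 < ρ i)
    (hrel : ∀ i, 1 ≤ i → i ≤ n → c i * ρ i = ρ (i - 1) + ρ (i + 1)) :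
    (∀ i, 1 ≤ i → i ≤ n → Int.gcd (ρ (i - 1)) (ρ i) = Int.gcd (ρ i) (ρ (i + 1))) ∧
    (ρ (n + 1) = 0 →
      (Int.gcd (ρ 0) (ρ 1) : ℤ) = ρ n ∧ ∀ i, 1 ≤ i → i ≤ n → ρ n ∣ ρ i) := by
  refine ⟨fun i hi₁ hin => chain_gcd_pred_eq_gcd_succ hrel hi₁ hin, fun hterm => ?_⟩
  have hgcd : (Int.gcd (ρ 0) (ρ 1) : ℤ) = ρ n := by
    rw [← chain_gcd_eq_gcd_zero_one hrel le_rfl, hterm, Int.gcd_zero_right,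
      Int.natAbs_of_nonneg (hpos n le_rfl).le]
  refine ⟨hgcd, fun i _ hin => ?_⟩
  rw [← hgcd, ← chain_gcd_eq_gcd_zero_one hrel hin]
  exact Int.gcd_dvd_left _ _

/-- **Constancy of consecutive gcds along a chain of an arithmetical graph.**
Here `ρ 0 = r`, `ρ i = r_i` for `1 ≤ i ≤ n`, and `ρ (n+1) = r'`; the chain relations
coming from `MR = 0` read `c i * ρ i = ρ (i-1) + ρ (i+1)`.  All consecutive gcds
along the chain are equal; in the terminal case `r' = 0` one has
`gcd (r, r₁) = r_n` and `r_n` divides every `r_i`. -/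
theorem chain_consecutive_gcds_constant (n : ℕ) (hn : 1 ≤ n) (ρ : ℕ → ℤ) (c : ℕ → ℤ)
    (hpos : ∀ i ≤ n, 0 < ρ i) (hlast : 0 ≤ ρ (n + 1))
    (hrel : ∀ i, 1 ≤ i → i ≤ n → c i * ρ i = ρ (i - 1) + ρ (i + 1)) :
    (∀ i, 1 ≤ i → i ≤ n → Int.gcd (ρ (i - 1)) (ρ i) = Int.gcd (ρ i) (ρ (i + 1))) ∧
    (ρ (n + 1) = 0 →
      (Int.gcd (ρ 0) (ρ 1) : ℤ) = ρ n ∧ ∀ i, 1 ≤ i → i ≤ n → ρ n ∣ ρ i) :=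
  chain_consecutive_gcds_constant_general n ρ c hpos hrel
end

section
/- Let n ≥ 1, let r, r_1, …, r_n be positive integers, let r' be a nonnegative integer, and let c_1, …, c_n be integers with c_i r_i = r_{i-1} + r_{i+1} for i = 1, …, n, where r_0 := r and r_{n+1} := r'. Define b_0 := 0, b_1 := 1, b_{j+1} := c_j b_j − b_{j-1} for 1 ≤ j ≤ n−1, and b := c_n b_n − b_{n-1}. Then b_i r_{i-1} − b_{i-1} r_i = r for all i = 1, …, n, and b·r_n = r + b_n·r'. Moreover, the integers b_1, …, b_n and b are all positive. In particular, for a terminal chain (r' = 0) one has b·r_n = r. -/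
/-- **The sequence `b` attached to a chain of an arithmetical graph.**
Here `ρ 0 = r`, `ρ i = r_i` for `1 ≤ i ≤ n`, `ρ (n+1) = r'`, and the chain relations
coming from `MR = 0` read `c i * ρ i = ρ (i-1) + ρ (i+1)`.  The sequence `b` is
defined by `b 0 = 0`, `b 1 = 1`, `b (j+1) = c j * b j - b (j-1)`; in particular
`b (n+1)` is the integer called `b` in the paper.  Then
`b i * ρ (i-1) - b (i-1) * ρ i = r` for `i = 1, …, n`, `b * r_n = r + b_n * r'`,
all of `b 1, …, b n, b` are positive, and in the terminal case (`r' = 0`)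
`b * r_n = r`. -/
theorem chain_b_sequence (n : ℕ) (hn : 1 ≤ n) (ρ : ℕ → ℤ) (c : ℕ → ℤ) (b : ℕ → ℤ)
    (hpos : ∀ i ≤ n, 0 < ρ i) (hlast : 0 ≤ ρ (n + 1))
    (hrel : ∀ i, 1 ≤ i → i ≤ n → c i * ρ i = ρ (i - 1) + ρ (i + 1))
    (hb0 : b 0 = 0) (hb1 : b 1 = 1)
    (hbrec : ∀ j, 1 ≤ j → j ≤ n → b (j + 1) = c j * b j - b (j - 1)) :
    (∀ i, 1 ≤ i → i ≤ n → b i * ρ (i - 1) - b (i - 1) * ρ i = ρ 0) ∧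
    b (n + 1) * ρ n = ρ 0 + b n * ρ (n + 1) ∧
    (∀ i, 1 ≤ i → i ≤ n + 1 → 0 < b i) ∧
    (ρ (n + 1) = 0 → b (n + 1) * ρ n = ρ 0) := by
  have hρ0 : 0 < ρ 0 := hpos 0 (Nat.zero_le n)
  have key : ∀ i, 1 ≤ i → i ≤ n + 1 →
      b i * ρ (i - 1) - b (i - 1) * ρ i = ρ 0 ∧ 0 < b i := by
    intro i h1 h2
    induction i, h1 using Nat.le_induction with
    | base => simp [hb0, hb1]
    | succ i hi ih =>
      have hin : i ≤ n := Nat.lt_succ_iff.mp h2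
      obtain ⟨ihEq, ihPos⟩ := ih (le_trans hin (Nat.le_succ n))
      have hrec := hbrec i hi hin
      have hr := hrel i hi hin
      have hρnext : 0 ≤ ρ (i + 1) := by
        rcases Nat.lt_or_ge i n with h | h
        · exact (hpos (i + 1) h).le
        · have : i = n := le_antisymm hin h
          subst this; exact hlast
      have hρi : 0 < ρ i := hpos i hin
      have hsimp : i + 1 - 1 = i := rfl
      rw [hsimp]
      have hEq : b (i + 1) * ρ i - b i * ρ (i + 1) = ρ 0 := by
        rw [hrec]
        have : (c i * b i - b (i - 1)) * ρ i - b i * ρ (i + 1)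
            = b i * (c i * ρ i - ρ (i + 1)) - b (i - 1) * ρ i := by ring
        rw [this, hr]
        have : ρ (i - 1) + ρ (i + 1) - ρ (i + 1) = ρ (i - 1) := by ring
        rw [mul_sub]
        calc b i * (ρ (i - 1) + ρ (i + 1)) - b i * ρ (i + 1) - b (i - 1) * ρ i
            = b i * ρ (i - 1) - b (i - 1) * ρ i := by ring
          _ = ρ 0 := ihEq
      refine ⟨hEq, ?_⟩
      nlinarith [mul_nonneg ihPos.le hρnext]
  refine ⟨fun i h1 h2 => (key i h1 (le_trans h2 (Nat.le_succ n))).1, ?_, ?_, ?_⟩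
  · have := (key (n + 1) (by omega) le_rfl).1
    simp only [Nat.add_sub_cancel] at this
    linarith
  · exact fun i h1 h2 => (key i h1 h2).2
  · intro h0
    have := (key (n + 1) (by omega) le_rfl).1
    simp only [Nat.add_sub_cancel] at this
    rw [h0] at this
    linarith
end

section
/- Let r, r_1, …, r_n be positive integers and c_1, …, c_n integers satisfying the terminal-chain relations c_i r_i = r_{i-1} + r_{i+1} for i = 1, …, n with r_0 := r and r_{n+1} := 0, and define b_0 := 0, b_1 := 1, b_{j+1} := c_j b_j − b_{j-1} for 1 ≤ j ≤ n−1. Then r divides r_i b_j − r_j b_i for all 1 ≤ i, j ≤ n. Moreover, b_n and r/r_n are coprime (note that r_n = gcd(r, r_1) divides r). -/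
/-!
The differences `r_j - r_1 b_j` satisfy the chain recurrence with initial values `r, 0`, so they
are all divisible by `r`; this gives the congruences. The Wronskian `r_j b_{j+1} - r_{j+1} b_j` of
the two solutions is constant, equal to `r`; at `j = n - 1`, using `r_{n-1} = c_n r_n`, it reads
`r = r_n (c_n b_n - b_{n-1})`. Consecutive `b`'s are coprime (as `b_0, b_1` are), hence so are
`b_n` and `c_n b_n - b_{n-1} = r / r_n`.
-/

def SolvesChainRec (c : ℕ → ℤ) (m : ℕ) (x : ℕ → ℤ) : Prop :=
  ∀ j, 1 ≤ j → j ≤ m → x (j + 1) = c j * x j - x (j - 1)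

namespace SolvesChainRec

variable {c : ℕ → ℤ} {m : ℕ} {x y : ℕ → ℤ}

lemma succ_succ (hx : SolvesChainRec c m x) {j : ℕ} (hj : j + 1 ≤ m) :
    x (j + 2) = c (j + 1) * x (j + 1) - x j :=
  hx (j + 1) (Nat.le_add_left 1 j) hj

lemma sub_mul (hx : SolvesChainRec c m x) (hy : SolvesChainRec c m y) (a : ℤ) :
    SolvesChainRec c m (fun j => x j - a * y j) := by
  intro j hj1 hjm
  simp only [hx j hj1 hjm, hy j hj1 hjm]
  ring

lemma dvd_of_dvd (hx : SolvesChainRec c m x) {d : ℤ} (h0 : d ∣ x 0) (h1 : d ∣ x 1) :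
    ∀ j ≤ m + 1, d ∣ x j := by
  suffices h : ∀ j ≤ m, d ∣ x j ∧ d ∣ x (j + 1) by
    intro j hj
    rcases Nat.lt_or_ge j (m + 1) with hlt | hge
    · exact (h j (by omega)).1
    · obtain rfl : j = m + 1 := by omega
      exact (h m le_rfl).2
  intro j
  induction j with
  | zero => exact fun _ => ⟨h0, h1⟩
  | succ j ih =>
    intro hj
    obtain ⟨hdj, hdj1⟩ := ih (by omega)
    refine ⟨hdj1, ?_⟩
    rw [hx.succ_succ hj]
    exact (hdj1.mul_left _).sub hdj

lemma wronskian_eq (hx : SolvesChainRec c m x) (hy : SolvesChainRec c m y) :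
    ∀ j ≤ m, x j * y (j + 1) - x (j + 1) * y j = x 0 * y 1 - x 1 * y 0 := by
  intro j
  induction j with
  | zero => exact fun _ => rfl
  | succ j ih =>
    intro hj
    rw [hx.succ_succ hj, hy.succ_succ hj, ← ih (by omega)]
    ring

lemma isCoprime_succ (hx : SolvesChainRec c m x) (h01 : IsCoprime (x 0) (x 1)) :
    ∀ j ≤ m, IsCoprime (x j) (x (j + 1)) := by
  intro j
  induction j with
  | zero => exact fun _ => h01
  | succ j ih =>
    intro hj
    rw [hx.succ_succ hj, sub_eq_neg_add]
    exact (ih (by omega)).symm.neg_right.add_mul_right_right _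

end SolvesChainRec

/-- **Lemma 2.6 of the paper.**  For a terminal chain (`ρ 0 = r`, `ρ i = r_i`,
`ρ (n+1) = 0`) with attached sequence `b 0 = 0`, `b 1 = 1`,
`b (j+1) = c j * b j - b (j-1)` (for `1 ≤ j ≤ n-1`), one has
`r ∣ r_i b_j − r_j b_i` for all `1 ≤ i, j ≤ n`; moreover `r_n ∣ r` and
`b_n` is coprime to `r / r_n`. -/
theorem chain_b_coprime (n : ℕ) (hn : 1 ≤ n) (ρ : ℕ → ℤ) (c : ℕ → ℤ) (b : ℕ → ℤ)
    (hpos : ∀ i ≤ n, 0 < ρ i) (hterm : ρ (n + 1) = 0)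
    (hrel : ∀ i, 1 ≤ i → i ≤ n → c i * ρ i = ρ (i - 1) + ρ (i + 1))
    (hb0 : b 0 = 0) (hb1 : b 1 = 1)
    (hbrec : ∀ j, 1 ≤ j → j ≤ n - 1 → b (j + 1) = c j * b j - b (j - 1)) :
    (∀ i j, 1 ≤ i → i ≤ n → 1 ≤ j → j ≤ n → ρ 0 ∣ ρ i * b j - ρ j * b i) ∧
    ρ n ∣ ρ 0 ∧ Int.gcd (b n) (ρ 0 / ρ n) = 1 := by
  obtain ⟨k, rfl⟩ : ∃ k, n = k + 1 := ⟨n - 1, by omega⟩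
  have hρ : SolvesChainRec c k ρ := fun j hj1 hjk => by
    linarith [hrel j hj1 (by omega)]
  have hb : SolvesChainRec c k b := fun j hj1 hjk => hbrec j hj1 (by omega)
  have hlast : ρ k = c (k + 1) * ρ (k + 1) := by
    simpa [hterm] using (hrel (k + 1) hn le_rfl).symm
  have hfac : ρ 0 = ρ (k + 1) * (c (k + 1) * b (k + 1) - b k) := by
    have hW := hρ.wronskian_eq hb k le_rfl
    rw [hb0, hb1, hlast] at hW
    linear_combination -hW
  have hcong : ∀ j ≤ k + 1, ρ 0 ∣ ρ j - ρ 1 * b j :=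
    (hρ.sub_mul hb (ρ 1)).dvd_of_dvd (by simp [hb0]) (by simp [hb1])
  refine ⟨fun i j _ hi _ hj => ?_, ⟨_, hfac⟩, ?_⟩
  · have hsplit : ρ i * b j - ρ j * b i = (ρ i - ρ 1 * b i) * b j - (ρ j - ρ 1 * b j) * b i := by
      ring
    rw [hsplit]
    exact ((hcong i hi).mul_right _).sub ((hcong j hj).mul_right _)
  · rw [hfac, Int.mul_ediv_cancel_left _ (hpos (k + 1) le_rfl).ne', ← Int.isCoprime_iff_gcd_eq_one,
      sub_eq_neg_add]
    have hbk := hb.isCoprime_succ (by simp [hb0, hb1, isCoprime_zero_left]) k le_rfl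
    exact hbk.neg_left.symm.add_mul_right_right _
end

section
/- Let r, r_1, …, r_n be positive integers and c_1, …, c_n integers satisfying the terminal-chain relations c_i r_i = r_{i-1} + r_{i+1} for i = 1, …, n with r_0 := r and r_{n+1} := 0, and define b_0 := 0, b_1 := 1, b_{j+1} := c_j b_j − b_{j-1} for 1 ≤ j ≤ n−1. Then in ℚ one has the identity 1/(r·r_1) + 1/(r_1·r_2) + … + 1/(r_{n-1}·r_n) = b_n/(r·r_n). -/
/-!
Two solutions `x`, `y` of the same three-term recurrence `z (j+2) = c (j+1) z (j+1) - z j`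
have a constant Casoratian `x (k+1) y k - x k y (k+1)`. The multiplicities `r_i` and the
sequence `b_i` are two such solutions with Casoratian `r` at `0`, which turns each term
`1 / (r_k r_{k+1})` into the difference `b_{k+1} / (r r_{k+1}) - b_k / (r r_k)`, so the sum
telescopes.
-/

section Casoratian

variable {R : Type*} [CommRing R]

def casoratian (x y : ℕ → R) (k : ℕ) : R := x (k + 1) * y k - x k * y (k + 1)

lemma casoratian_succ {x y : ℕ → R} {a : R} {k : ℕ} (hx : x (k + 2) = a * x (k + 1) - x k)
    (hy : y (k + 2) = a * y (k + 1) - y k) : casoratian x y (k + 1) = casoratian x y k := by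
  simp only [casoratian, hx, hy]
  ring

lemma casoratian_eq_casoratian_zero {x y c : ℕ → R} {N : ℕ}
    (hx : ∀ j < N, x (j + 2) = c (j + 1) * x (j + 1) - x j)
    (hy : ∀ j < N, y (j + 2) = c (j + 1) * y (j + 1) - y j) :
    ∀ k ≤ N, casoratian x y k = casoratian x y 0 := by
  intro k hk
  induction k with
  | zero => rfl
  | succ k ih => rw [casoratian_succ (hx k hk) (hy k hk), ih (by omega)]

end Casoratian

section Telescoping

variable {K : Type*} [Field K] {x y : ℕ → K}

lemma one_div_mul_eq_sub_of_casoratian {k : ℕ} (h0 : y 0 ≠ 0) (hk : y k ≠ 0)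
    (hk1 : y (k + 1) ≠ 0) (hW : casoratian x y k = y 0) :
    1 / (y k * y (k + 1)) = x (k + 1) / (y 0 * y (k + 1)) - x k / (y 0 * y k) := by
  unfold casoratian at hW
  field_simp
  linear_combination -hW

lemma sum_one_div_mul_eq_of_casoratian {n : ℕ} (hy : ∀ i ≤ n, y i ≠ 0) (hx0 : x 0 = 0)
    (hW : ∀ k < n, casoratian x y k = y 0) :
    ∑ i ∈ Finset.range n, 1 / (y i * y (i + 1)) = x n / (y 0 * y n) := by
  rw [Finset.sum_congr rfl fun k hk => have hk : k < n := Finset.mem_range.mp hk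
      one_div_mul_eq_sub_of_casoratian (hy 0 n.zero_le) (hy k hk.le) (hy (k + 1) hk) (hW k hk),
    Finset.sum_range_sub (fun i => x i / (y 0 * y i)), hx0, zero_div, sub_zero]

end Telescoping

theorem chain_sum_of_inverses_general (n : ℕ) (ρ : ℕ → ℤ) (c : ℕ → ℤ) (b : ℕ → ℤ)
    (hpos : ∀ i ≤ n, 0 < ρ i)
    (hrel : ∀ i, 1 ≤ i → i ≤ n → c i * ρ i = ρ (i - 1) + ρ (i + 1))
    (hb0 : b 0 = 0) (hb1 : b 1 = 1)
    (hbrec : ∀ j, 1 ≤ j → j ≤ n - 1 → b (j + 1) = c j * b j - b (j - 1)) :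
    ∑ i ∈ Finset.Icc 1 n, (1 : ℚ) / ((ρ (i - 1) : ℚ) * (ρ i : ℚ))
      = (b n : ℚ) / ((ρ 0 : ℚ) * (ρ n : ℚ)) := by
  have hW : ∀ k < n, casoratian (fun i => (b i : ℚ)) (fun i => (ρ i : ℚ)) k = ρ 0 := by
    intro k hk
    rw [casoratian_eq_casoratian_zero (c := fun i => (c i : ℚ)) (N := n - 1) _ _ k (by omega)]
    · simp [casoratian, hb0, hb1]
    · intro j hj
      exact_mod_cast hbrec (j + 1) (by omega) (by omega)
    · intro j hj
      have h := hrel (j + 1) (by omega) (by omega)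
      rw [Nat.add_sub_cancel] at h
      exact_mod_cast (by linarith : ρ (j + 2) = c (j + 1) * ρ (j + 1) - ρ j)
  rw [← Finset.Ico_add_one_right_eq_Icc, Finset.sum_Ico_eq_sum_range]
  simp only [Nat.add_sub_cancel, add_comm 1]
  exact sum_one_div_mul_eq_of_casoratian (fun i hi => by exact_mod_cast (hpos i hi).ne')
    (by simp [hb0]) hW

/-- **Lemma 2.8 of the paper.**  For a terminal chain (`ρ 0 = r`, `ρ i = r_i`,
`ρ (n+1) = 0`) with attached sequence `b 0 = 0`, `b 1 = 1`,
`b (j+1) = c j * b j - b (j-1)` (for `1 ≤ j ≤ n-1`), one has in `ℚ`: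
`1/(r r₁) + 1/(r₁ r₂) + … + 1/(r_{n-1} r_n) = b_n / (r r_n)`. -/
theorem chain_sum_of_inverses (n : ℕ) (hn : 1 ≤ n) (ρ : ℕ → ℤ) (c : ℕ → ℤ) (b : ℕ → ℤ)
    (hpos : ∀ i ≤ n, 0 < ρ i) (hterm : ρ (n + 1) = 0)
    (hrel : ∀ i, 1 ≤ i → i ≤ n → c i * ρ i = ρ (i - 1) + ρ (i + 1))
    (hb0 : b 0 = 0) (hb1 : b 1 = 1)
    (hbrec : ∀ j, 1 ≤ j → j ≤ n - 1 → b (j + 1) = c j * b j - b (j - 1)) :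
    ∑ i ∈ Finset.Icc 1 n, (1 : ℚ) / ((ρ (i - 1) : ℚ) * (ρ i : ℚ))
      = (b n : ℚ) / ((ρ 0 : ℚ) * (ρ n : ℚ)) :=
  chain_sum_of_inverses_general n ρ c b hpos hrel hb0 hb1 hbrec
end
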